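/- arXiv:1307.0398 — 5 statements merged into one kernel-verified Lean document; each statement's English description precedes it below -/
import Mathlib

section
/- There exists an absolute constant C > 0 such that for every n ≥ 1 and every set A = {0 = j₀ < j₁ < ⋯ < j_r} ⊆ {0,1,…,n−1}, writing j_{r+1} = n, one has Σ_{k=0}^{2^n−1} ∏_{1 ≤ j < n, j ∉ A} |cos(π k / 2^{n−j})| ≤ C^{r+1} · ∏_{s=0}^{r} (j_{s+1} − j_s). -/
/-!
Splitting `k` by parity and using `sin (π x) = 2 sin (π x / 2) cos (π x / 2)` gives
`∑_{k<2^L} cosProd L (k + x) ≤ 1 + (L/2) |sin (π x)|`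
for every real shift `x`, hence a block of `h` consecutive factors contributes at most `h + 1 ≤ 2h`.
For the theorem, peel off the top block `(j_r, n)`: writing `k = u 2^h + s` with `h = n - j_r`,
the factors of that block depend only on `s`, while the remaining factors are those of the same
problem for `j_r` in place of `n`, with shift `(s + x) / 2^h`. Induction on `r`, uniform in the shift,
gives the bound with `C = 2`.
-/

open Finset Real

lemma abs_cos_pi_mul_nat_mul_two_pow_add_div (K : ℕ) {a b : ℕ} (hab : a ≤ b) (y : ℝ) :
    |cos (π * (K * 2 ^ b + y) / 2 ^ a)| = |cos (π * y / 2 ^ a)| := by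
  have harg : π * (K * 2 ^ b + y) / 2 ^ a = π * y / 2 ^ a + (K * 2 ^ (b - a) : ℕ) * π := by
    obtain ⟨c, rfl⟩ := Nat.exists_eq_add_of_le hab
    rw [Nat.add_sub_cancel_left, pow_add]
    push_cast
    field_simp
    ring
  rw [harg, cos_add_nat_mul_pi, abs_mul, abs_pow, abs_neg, abs_one, one_pow, one_mul]

lemma sum_range_mul {M : Type*} [AddCommMonoid M] (a b : ℕ) (f : ℕ → M) :
    ∑ k ∈ range (a * b), f k = ∑ s ∈ range b, ∑ u ∈ range a, f (u * b + s) := by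
  rw [sum_comm]
  induction a with
  | zero => simp
  | succ a ih => rw [Nat.succ_mul, sum_range_add, ih, sum_range_succ]

noncomputable def cosProd (L : ℕ) (y : ℝ) : ℝ :=
  ∏ i ∈ range L, |cos (π * y / 2 ^ (i + 1))|

noncomputable def cosProdSum (L : ℕ) (x : ℝ) : ℝ :=
  ∑ k ∈ range (2 ^ L), cosProd L (k + x)

lemma cosProd_succ (L : ℕ) (y : ℝ) :
    cosProd (L + 1) y = cosProd L (y / 2) * |cos (π * y / 2)| := by
  rw [cosProd, prod_range_succ', cosProd]
  congr 1
  · refine prod_congr rfl fun i _ ↦ ?_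
    rw [pow_succ]
    ring_nf
  · rw [zero_add, pow_one]

lemma cosProd_nat_mul_two_pow_add (L K : ℕ) (y : ℝ) :
    cosProd L (K * 2 ^ L + y) = cosProd L y :=
  prod_congr rfl fun _ hi ↦
    abs_cos_pi_mul_nat_mul_two_pow_add_div K (mem_range.1 hi) y

lemma cosProdSum_succ (L : ℕ) (x : ℝ) :
    cosProdSum (L + 1) x = |cos (π * x / 2)| * cosProdSum L (x / 2) +
      |sin (π * x / 2)| * cosProdSum L ((x + 1) / 2) := by
  have hterm (q e : ℕ) : cosProd (L + 1) ((q * 2 + e : ℕ) + x)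
      = |cos (π * (e + x) / 2)| * cosProd L (q + (e + x) / 2) := by
    have h := abs_cos_pi_mul_nat_mul_two_pow_add_div q le_rfl (e + x) (a := 1)
    rw [cosProd_succ, mul_comm]
    push_cast at h ⊢
    rw [pow_one] at h
    rw [add_assoc, h]
    ring_nf
  rw [cosProdSum, pow_succ, sum_range_mul, sum_range_succ, sum_range_one]
  simp only [hterm, ← mul_sum, cosProdSum, Nat.cast_zero, zero_add, Nat.cast_one,
    add_comm (1 : ℝ) x]
  rw [show π * (x + 1) / 2 = π * x / 2 + π / 2 by ring, cos_add_pi_div_two, abs_neg]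

lemma cosProdSum_le (L : ℕ) (x : ℝ) : cosProdSum L x ≤ 1 + L / 2 * |sin (π * x)| := by
  induction L generalizing x with
  | zero => simp [cosProdSum, cosProd]
  | succ L ih =>
    set a := |cos (π * x / 2)|
    set b := |sin (π * x / 2)|
    have hA : cosProdSum L (x / 2) ≤ 1 + L / 2 * b := by
      simpa only [← mul_div_assoc] using ih (x / 2)
    have hB : cosProdSum L ((x + 1) / 2) ≤ 1 + L / 2 * a := by
      simpa only [show π * ((x + 1) / 2) = π * x / 2 + π / 2 by ring, sin_add_pi_div_two]
        using ih ((x + 1) / 2)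
    have hsin : |sin (π * x)| = 2 * b * a := by
      rw [show π * x = 2 * (π * x / 2) by ring, sin_two_mul, abs_mul, abs_mul, abs_two]
    have ha : a ≤ 1 := abs_cos_le_one _
    have hb : b ≤ 1 := abs_sin_le_one _
    rw [cosProdSum_succ, hsin]
    push_cast
    nlinarith [mul_le_mul_of_nonneg_left hA (abs_nonneg (cos (π * x / 2))),
      mul_le_mul_of_nonneg_left hB (abs_nonneg (sin (π * x / 2))),
      mul_nonneg (sub_nonneg.2 ha) (sub_nonneg.2 hb)]

lemma sum_range_two_pow_succ_cosProd_le (L : ℕ) (x : ℝ) :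
    ∑ k ∈ range (2 ^ (L + 1)), cosProd L (k + x) ≤ L + 2 := by
  rw [pow_succ, mul_two, sum_range_add]
  have hperiod (k : ℕ) : cosProd L ((2 ^ L + k : ℕ) + x) = cosProd L (k + x) := by
    simpa [add_assoc] using cosProd_nat_mul_two_pow_add L 1 (k + x)
  simp only [hperiod]
  have h := cosProdSum_le L x
  rw [cosProdSum] at h
  nlinarith [abs_sin_le_one (π * x), (Nat.cast_nonneg L : (0 : ℝ) ≤ L)]

lemma prod_Ioo_abs_cos_eq_cosProd (p h : ℕ) (z : ℝ) :
    ∏ t ∈ Ioo p (p + h), |cos (π * z / 2 ^ (p + h - t))| = cosProd (h - 1) z := by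
  refine prod_nbij' (fun t ↦ p + h - 1 - t) (fun i ↦ p + h - 1 - i) ?_ ?_ ?_ ?_ ?_
  · intro t ht; simp only [mem_Ioo, mem_range] at ht ⊢; omega
  · intro i hi; simp only [mem_Ioo, mem_range] at hi ⊢; omega
  · intro t ht; simp only [mem_Ioo] at ht; omega
  · intro i hi; simp only [mem_range] at hi; omega
  · intro t ht
    rw [mem_Ioo] at ht
    rw [show p + h - 1 - t + 1 = p + h - t by omega]

lemma sum_prod_Ioo_abs_cos_le (p h : ℕ) (x : ℝ) :
    ∑ s ∈ range (2 ^ h), ∏ t ∈ Ioo p (p + h), |cos (π * (s + x) / 2 ^ (p + h - t))| ≤ h + 1 := by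
  simp only [prod_Ioo_abs_cos_eq_cosProd]
  cases h with
  | zero => simp [cosProd]
  | succ L =>
    push_cast
    linarith [sum_range_two_pow_succ_cosProd_le L x]

lemma sum_prod_abs_cos_union_Ioo {p : ℕ} (h : ℕ) {T : Finset ℕ} (hT : ∀ t ∈ T, t ≤ p) (x : ℝ) :
    ∑ k ∈ range (2 ^ (p + h)), ∏ t ∈ T ∪ Ioo p (p + h), |cos (π * (k + x) / 2 ^ (p + h - t))|
      = ∑ s ∈ range (2 ^ h),
          (∑ u ∈ range (2 ^ p), ∏ t ∈ T, |cos (π * (u + (s + x) / 2 ^ h) / 2 ^ (p - t))|) *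
            ∏ t ∈ Ioo p (p + h), |cos (π * (s + x) / 2 ^ (p + h - t))| := by
  have hdisj : Disjoint T (Ioo p (p + h)) :=
    disjoint_left.2 fun t ht ht' ↦ (hT t ht).not_gt (mem_Ioo.1 ht').1
  rw [pow_add, sum_range_mul]
  refine sum_congr rfl fun s _ ↦ ?_
  rw [sum_mul]
  refine sum_congr rfl fun u _ ↦ ?_
  rw [prod_union hdisj]
  congr 1
  · refine prod_congr rfl fun t ht ↦ ?_
    rw [show p + h - t = (p - t) + h by have := hT t ht; omega, pow_add]
    push_cast
    rw [add_assoc]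
    field_simp
  · refine prod_congr rfl fun t ht ↦ ?_
    have hle : p + h - t ≤ h := by have := (mem_Ioo.1 ht).1; omega
    push_cast
    rw [add_assoc, abs_cos_pi_mul_nat_mul_two_pow_add_div u hle]

lemma filter_Ico_succ_eq_union_Ioo (j : ℕ → ℕ) (m : ℕ) (hj : MonotoneOn j (Set.Iic (m + 1))) :
    (Ico 1 (j (m + 1))).filter (· ∉ (range (m + 1)).image j)
      = (Ico 1 (j m)).filter (· ∉ (range m).image j) ∪ Ioo (j m) (j (m + 1)) := by
  have hle : ∀ s < m, j s ≤ j m := fun s hs ↦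
    hj (Set.mem_Iic.2 (by omega)) (Set.mem_Iic.2 (by omega)) hs.le
  have hsucc : j m ≤ j (m + 1) := hj (Set.mem_Iic.2 (by omega)) (Set.mem_Iic.2 le_rfl) (by omega)
  ext t
  simp only [mem_union, mem_filter, mem_Ico, mem_Ioo, range_add_one, image_insert, mem_insert,
    mem_image, mem_range, not_or, not_exists, not_and]
  constructor
  · rintro ⟨⟨h1, h2⟩, hne, hnot⟩
    rcases lt_or_gt_of_ne hne with hlt | hgt
    · exact Or.inl ⟨⟨h1, hlt⟩, hnot⟩
    · exact Or.inr ⟨hgt, h2⟩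
  · rintro (⟨⟨h1, h2⟩, hnot⟩ | ⟨h1, h2⟩)
    · exact ⟨⟨h1, by omega⟩, by omega, hnot⟩
    · exact ⟨⟨by omega, h2⟩, by omega, fun s hs hst ↦ by have := hle s hs; omega⟩

theorem sum_prod_abs_cos_filter_le (j : ℕ → ℕ) (hj0 : j 0 = 0) (m : ℕ)
    (hj : StrictMonoOn j (Set.Iic m)) (x : ℝ) :
    ∑ k ∈ range (2 ^ j m),
        ∏ t ∈ (Ico 1 (j m)).filter (· ∉ (range m).image j), |cos (π * (k + x) / 2 ^ (j m - t))|
      ≤ 2 ^ m * ∏ s ∈ range m, ((j (s + 1) : ℝ) - j s) := by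
  induction m generalizing x with
  | zero => simp [hj0]
  | succ m ih =>
    have hstep : j m < j (m + 1) :=
      hj (Set.mem_Iic.2 m.le_succ) (Set.mem_Iic.2 le_rfl) m.lt_succ_self
    obtain ⟨L, hL⟩ := Nat.exists_eq_add_of_lt hstep
    have hbound := ih (hj.mono (Set.Iic_subset_Iic.2 m.le_succ))
    have hbound_nonneg : 0 ≤ 2 ^ m * ∏ s ∈ range m, ((j (s + 1) : ℝ) - j s) := by
      refine mul_nonneg (by positivity) (prod_nonneg fun s hs ↦ ?_)
      have hs : s + 1 ≤ m + 1 := by rw [mem_range] at hs; omega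
      exact sub_nonneg.2 <| Nat.cast_le.2 <|
        hj.monotoneOn (Set.mem_Iic.2 (by omega)) (Set.mem_Iic.2 hs) s.le_succ
    rw [filter_Ico_succ_eq_union_Ioo j m hj.monotoneOn, hL, add_assoc,
      sum_prod_abs_cos_union_Ioo _ (fun t ht ↦ (mem_Ico.1 (mem_filter.1 ht).1).2.le)]
    calc _ ≤ ∑ s ∈ range (2 ^ (L + 1)), (2 ^ m * ∏ s ∈ range m, ((j (s + 1) : ℝ) - j s)) *
              ∏ t ∈ Ioo (j m) (j m + (L + 1)), |cos (π * (s + x) / 2 ^ (j m + (L + 1) - t))| :=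
          sum_le_sum fun s _ ↦ mul_le_mul_of_nonneg_right (hbound _) <|
            prod_nonneg fun _ _ ↦ abs_nonneg _
      _ ≤ (2 ^ m * ∏ s ∈ range m, ((j (s + 1) : ℝ) - j s)) * ((L + 1 : ℕ) + 1) := by
          rw [← mul_sum]
          gcongr
          exact sum_prod_Ioo_abs_cos_le _ _ x
      _ ≤ 2 ^ (m + 1) * ∏ s ∈ range (m + 1), ((j (s + 1) : ℝ) - j s) := by
          rw [prod_range_succ, hL, pow_succ]
          push_cast
          nlinarith [mul_nonneg hbound_nonneg (Nat.cast_nonneg L : (0 : ℝ) ≤ L)]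

/-- for `A = {0 = j₀ < j₁ < ⋯ < j_r} ⊆ {0,…,n-1}` with `j_{r+1} = n`,
`∑_{k<2^n} ∏_{1 ≤ t < n, t ∉ A} |cos(π k / 2^{n-t})| ≤ C^{r+1} ∏_{s=0}^{r} (j_{s+1} - j_s)`. -/
theorem sum_prod_cos_gap_bound :
    ∃ C : ℝ, 0 < C ∧ ∀ (n r : ℕ) (j : ℕ → ℕ), 1 ≤ n →
      j 0 = 0 → j (r + 1) = n → (∀ s, s ≤ r → j s < j (s + 1)) →
      ∑ k ∈ Finset.range (2 ^ n),
          ∏ t ∈ (Finset.Ico 1 n).filter (fun t => t ∉ (Finset.range (r + 1)).image j),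
            |Real.cos (Real.pi * k / 2 ^ (n - t))|
        ≤ C ^ (r + 1) * ∏ s ∈ Finset.range (r + 1), ((j (s + 1) : ℝ) - j s) := by
  refine ⟨2, two_pos, fun n r j _ hj0 hjn hj ↦ ?_⟩
  have hmono : StrictMonoOn j (Set.Iic (r + 1)) :=
    strictMonoOn_Iic_of_lt_succ fun s hs ↦ hj s (Nat.lt_succ_iff.1 hs)
  have h := sum_prod_abs_cos_filter_le j hj0 (r + 1) hmono 0
  rw [hjn] at h
  simpa only [add_zero] using h
end

section
/- There exists an absolute constant C > 0 such that for every integer m ≥ 1 and every θ ∈ ℝ, Σ_{ℓ=0}^{2^m−1} ∏_{j=1}^{m−1} |cos(π 2^j (ℓ+θ)/2^m)| ≤ C·m, where the empty product (case m = 1) is interpreted as 1. -/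
/-!
Telescoping the double-angle formula gives
`sin (2 ^ (n + 1) * t) = 2 ^ n * sin (2 * t) * ∏_{j=1}^{n} cos (2 ^ j * t)`. With `N = 2 ^ n`,
`m = n + 1` and `x = ℓ + θ`, the `j`-th factor of the product is `|cos (2 ^ j * t)|` for
`t = π x / 2 ^ m`, so Jordan's inequality `sin (π y) ≥ 2 min y (1 - y)` bounds the product by
`min 1 (1 / (2 * dist(x, Nℤ)))`. The product is `N`-periodic in `x`, so a window of `N`
consecutive values of `ℓ` may be taken with `θ ∈ [0, 1)`; there the `ℓ`-th term is at most
`1 / (ℓ + 1) + 1 / (N - ℓ)`, and the window sums to at most `2 * harmonic N ≤ 2 (1 + n)`.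
The `2 ^ m` values of `ℓ` form two windows.
-/

open Finset

theorem Function.Periodic.sum_range_add_fract {M : Type*} [AddCancelCommMonoid M] {f : ℝ → M}
    {N : ℕ} (hf : Function.Periodic f N) (θ : ℝ) :
    ∑ l ∈ range N, f (l + θ) = ∑ l ∈ range N, f (l + Int.fract θ) := by
  have h1 : Function.Periodic (fun θ ↦ ∑ l ∈ range N, f (l + θ)) 1 := by
    intro θ
    have := sum_range_succ' (fun l ↦ f (l + θ)) N
    rw [sum_range_succ, add_comm (N : ℝ), hf θ, Nat.cast_zero, zero_add] at this
    simp only [Nat.cast_succ, add_assoc, add_comm (1 : ℝ)] at this ⊢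
    exact (add_right_cancel this).symm
  simpa using (h1.sub_int_mul_eq (x := θ) ⌊θ⌋).symm

theorem sin_two_pow_mul_eq (n : ℕ) (t : ℝ) :
    Real.sin (2 ^ (n + 1) * t) =
      2 ^ n * Real.sin (2 * t) * ∏ j ∈ Ico 1 (n + 1), Real.cos (2 ^ j * t) := by
  induction n with
  | zero => simp
  | succ n ih =>
    rw [pow_succ, mul_comm _ 2, mul_assoc, Real.sin_two_mul, ih,
      prod_Ico_succ_top (by omega : 1 ≤ n + 1)]
    ring

theorem two_mul_min_le_sin_pi_mul {y : ℝ} (h0 : 0 ≤ y) (h1 : y ≤ 1) :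
    2 * min y (1 - y) ≤ Real.sin (Real.pi * y) := by
  have jordan : ∀ z, 0 ≤ z → z ≤ 1 / 2 → 2 * z ≤ Real.sin (Real.pi * z) := fun z hz0 hz1 ↦ by
    have := Real.mul_le_sin (x := Real.pi * z) (by positivity) (by nlinarith [Real.pi_pos])
    rwa [← mul_assoc, div_mul_cancel₀ _ Real.pi_ne_zero] at this
  rcases le_total y (1 / 2) with hy | hy
  · exact (mul_le_mul_of_nonneg_left (min_le_left _ _) zero_le_two).trans (jordan y h0 hy)
  · calc 2 * min y (1 - y) ≤ 2 * (1 - y) := by gcongr; exact min_le_right _ _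
      _ ≤ Real.sin (Real.pi * (1 - y)) := jordan _ (by linarith) (by linarith)
      _ = Real.sin (Real.pi * y) := by rw [mul_one_sub, Real.sin_pi_sub]

theorem le_one_div_succ_of_two_mul_le_one {P x : ℝ} {a : ℕ} (hP0 : 0 ≤ P) (hP1 : P ≤ 1)
    (hax : a ≤ x) (h : 2 * x * P ≤ 1) : P ≤ 1 / (a + 1) := by
  rw [le_div_iff₀ (by positivity)]
  rcases Nat.eq_zero_or_pos a with rfl | ha
  · simpa using hP1
  · have : (1 : ℝ) ≤ a := by exact_mod_cast ha
    nlinarith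

theorem harmonic_two_pow_le (n : ℕ) : (harmonic (2 ^ n) : ℝ) ≤ 1 + n := by
  have hlog : Real.log 2 ≤ 1 := by
    have := Real.log_le_sub_one_of_pos (x := 2) two_pos; linarith
  calc (harmonic (2 ^ n) : ℝ) ≤ 1 + Real.log (2 ^ n : ℕ) := harmonic_le_one_add_log _
    _ = 1 + n * Real.log 2 := by push_cast; rw [Real.log_pow]
    _ ≤ 1 + n := by gcongr; nlinarith [(n.cast_nonneg : (0 : ℝ) ≤ n)]

noncomputable def dyadicCosProd (m : ℕ) (x : ℝ) : ℝ :=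
  ∏ j ∈ Ico 1 m, |Real.cos (Real.pi * 2 ^ j * x / 2 ^ m)|

namespace dyadicCosProd

theorem nonneg (m : ℕ) (x : ℝ) : 0 ≤ dyadicCosProd m x :=
  prod_nonneg fun _ _ ↦ abs_nonneg _

theorem le_one (m : ℕ) (x : ℝ) : dyadicCosProd m x ≤ 1 :=
  prod_le_one (fun _ _ ↦ abs_nonneg _) fun _ _ ↦ Real.abs_cos_le_one _

theorem periodic (n : ℕ) : Function.Periodic (dyadicCosProd (n + 1)) (2 ^ n) := by
  intro x
  refine prod_congr rfl fun j hj ↦ ?_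
  obtain ⟨i, rfl⟩ : ∃ i, j = i + 1 := ⟨j - 1, by simp at hj; omega⟩
  have : Real.pi * 2 ^ (i + 1) * (x + 2 ^ n) / 2 ^ (n + 1) =
      Real.pi * 2 ^ (i + 1) * x / 2 ^ (n + 1) + (2 ^ i : ℕ) * Real.pi := by
    push_cast; field_simp; ring
  rw [this, Real.cos_add_nat_mul_pi, abs_mul, abs_pow, abs_neg, abs_one, one_pow, one_mul]

theorem two_pow_mul_abs_sin_mul_le_one (n : ℕ) (x : ℝ) :
    2 ^ n * |Real.sin (Real.pi * (x / 2 ^ n))| * dyadicCosProd (n + 1) x ≤ 1 := by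
  set t := Real.pi * x / 2 ^ (n + 1)
  have h := congrArg abs (sin_two_pow_mul_eq n t)
  simp only [abs_mul, abs_prod, abs_pow, abs_two] at h
  have h2t : Real.pi * (x / 2 ^ n) = 2 * t := by simp only [t]; field_simp; ring
  have hprod : dyadicCosProd (n + 1) x = ∏ j ∈ Ico 1 (n + 1), |Real.cos (2 ^ j * t)| :=
    prod_congr rfl fun j _ ↦ by simp only [t]; ring_nf
  rw [h2t, hprod, ← h]
  exact Real.abs_sin_le_one _

theorem two_mul_min_mul_le_one {n : ℕ} {x : ℝ} (hx0 : 0 ≤ x) (hx : x ≤ 2 ^ n) :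
    2 * min x (2 ^ n - x) * dyadicCosProd (n + 1) x ≤ 1 := by
  have h2n : (0 : ℝ) < 2 ^ n := by positivity
  have hy := two_mul_min_le_sin_pi_mul (y := x / 2 ^ n) (by positivity)
    ((div_le_one h2n).mpr hx)
  have hmin : min x (2 ^ n - x) = 2 ^ n * min (x / 2 ^ n) (1 - x / 2 ^ n) := by
    rw [mul_min_of_nonneg _ _ h2n.le]; congr 1 <;> field_simp
  calc 2 * min x (2 ^ n - x) * dyadicCosProd (n + 1) x
      = 2 ^ n * (2 * min (x / 2 ^ n) (1 - x / 2 ^ n)) * dyadicCosProd (n + 1) x := by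
        rw [hmin]; ring
    _ ≤ 2 ^ n * |Real.sin (Real.pi * (x / 2 ^ n))| * dyadicCosProd (n + 1) x := by
        gcongr
        · exact nonneg _ _
        · exact hy.trans (le_abs_self _)
    _ ≤ 1 := two_pow_mul_abs_sin_mul_le_one n x

theorem natCast_add_le {n l : ℕ} (hl : l < 2 ^ n) {u : ℝ} (hu0 : 0 ≤ u) (hu1 : u < 1) :
    dyadicCosProd (n + 1) (l + u) ≤ 1 / (l + 1) + 1 / ((2 ^ n - 1 - l : ℕ) + 1) := by
  have hl' : (l : ℝ) + 1 ≤ 2 ^ n := by exact_mod_cast hl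
  have h := two_mul_min_mul_le_one (n := n) (x := l + u) (by positivity) (by linarith)
  have hP0 := nonneg (n + 1) (l + u)
  have hP1 := le_one (n + 1) (l + u)
  rcases min_cases (l + u) (2 ^ n - (l + u)) with ⟨hmin, -⟩ | ⟨hmin, -⟩ <;> rw [hmin] at h
  · have := le_one_div_succ_of_two_mul_le_one hP0 hP1 (by linarith) h
    have : 0 ≤ 1 / (((2 ^ n - 1 - l : ℕ) : ℝ) + 1) := by positivity
    linarith
  · have hcast : ((2 ^ n - 1 - l : ℕ) : ℝ) = 2 ^ n - 1 - l := by
      rw [Nat.cast_sub (by omega), Nat.cast_sub (Nat.one_le_two_pow)]; push_cast; ring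
    have := le_one_div_succ_of_two_mul_le_one (a := 2 ^ n - 1 - l) hP0 hP1
      (by rw [hcast]; linarith) h
    have : 0 ≤ 1 / ((l : ℝ) + 1) := by positivity
    linarith

theorem sum_range_le_harmonic (n : ℕ) (θ : ℝ) :
    ∑ l ∈ range (2 ^ n), dyadicCosProd (n + 1) (l + θ) ≤ 2 * (harmonic (2 ^ n) : ℝ) := by
  have hper : Function.Periodic (dyadicCosProd (n + 1)) ((2 ^ n : ℕ) : ℝ) := by
    exact_mod_cast periodic n
  rw [hper.sum_range_add_fract]
  have hH : (harmonic (2 ^ n) : ℝ) = ∑ l ∈ range (2 ^ n), 1 / ((l : ℝ) + 1) := by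
    simp [harmonic]
  calc ∑ l ∈ range (2 ^ n), dyadicCosProd (n + 1) (l + Int.fract θ)
      ≤ ∑ l ∈ range (2 ^ n), (1 / ((l : ℝ) + 1) + 1 / ((2 ^ n - 1 - l : ℕ) + 1)) :=
        sum_le_sum fun l hl ↦
          natCast_add_le (mem_range.mp hl) (Int.fract_nonneg θ) (Int.fract_lt_one θ)
    _ = 2 * (harmonic (2 ^ n) : ℝ) := by
        rw [sum_add_distrib, sum_range_reflect (fun l ↦ 1 / ((l : ℝ) + 1)), hH, two_mul]

end dyadicCosProd

/-- `∑_{ℓ=0}^{2^m-1} ∏_{j=1}^{m-1} |cos(π 2^j (ℓ+θ)/2^m)| ≤ C·m`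
for an absolute constant `C > 0`. -/
theorem sum_prod_cos_shift_bound :
    ∃ C : ℝ, 0 < C ∧ ∀ (m : ℕ), 1 ≤ m → ∀ θ : ℝ,
      ∑ l ∈ Finset.range (2 ^ m),
          ∏ j ∈ Finset.Ico 1 m, |Real.cos (Real.pi * 2 ^ j * ((l : ℝ) + θ) / 2 ^ m)|
        ≤ C * m := by
  refine ⟨4, by norm_num, fun m hm θ ↦ ?_⟩
  obtain ⟨n, rfl⟩ : ∃ n, m = n + 1 := ⟨m - 1, by omega⟩
  change ∑ l ∈ range (2 ^ (n + 1)), dyadicCosProd (n + 1) (l + θ) ≤ _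
  rw [pow_succ, mul_two, sum_range_add]
  have hshift : ∑ l ∈ range (2 ^ n), dyadicCosProd (n + 1) ((2 ^ n + l : ℕ) + θ) =
      ∑ l ∈ range (2 ^ n), dyadicCosProd (n + 1) (l + (2 ^ n + θ)) :=
    sum_congr rfl fun l _ ↦ by push_cast; ring_nf
  rw [hshift]
  have := dyadicCosProd.sum_range_le_harmonic n θ
  have := dyadicCosProd.sum_range_le_harmonic n (2 ^ n + θ)
  have := harmonic_two_pow_le n
  push_cast
  linarith
end

section
/- Let g : ℝ → ℂ be continuously differentiable and 1-periodic, let 0 < δ ≤ 1, and let F ⊆ [0,1) be a finite set such that ‖ξ − ξ′‖ ≥ δ for all distinct ξ, ξ′ ∈ F, where ‖·‖ denotes the distance to the nearest integer. Then Σ_{ξ∈F} |g(ξ)| ≤ δ^{−1} ∫_0^1 |g(θ)| dθ + ∫_0^1 |g′(θ)| dθ. -/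
open Finset MeasureTheory

/-- The distance from a real number to the nearest integer. -/
noncomputable def distNearestInt (t : ℝ) : ℝ := |t - round t|

/-! Each `ξ ∈ F` controls `δ ‖g ξ‖` by the integral of `‖g‖ + δ ‖g'‖` over the window `(ξ, ξ + δ]`
(fundamental theorem of calculus). Separation in the distance to the nearest integer makes these
windows pairwise disjoint and fits all of them into one period `(min F, min F + 1]`, so summing over
`F` and using periodicity gives `δ ∑ ‖g ξ‖ ≤ ∫₀¹ ‖g‖ + δ ∫₀¹ ‖g'‖`. -/

lemma add_le_and_add_le_add_one_of_le_distNearestInt {ξ ξ' δ : ℝ} (hξ : 0 ≤ ξ) (hξ' : ξ' < 1)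
    (hlt : ξ < ξ') (h : δ ≤ distNearestInt (ξ' - ξ)) : ξ + δ ≤ ξ' ∧ ξ' + δ ≤ ξ + 1 := by
  have h0 := (round_le (ξ' - ξ) 0).trans' h
  have h1 := (round_le (ξ' - ξ) 1).trans' h
  push_cast at h0 h1
  rw [sub_zero, abs_of_pos (by linarith)] at h0
  rw [abs_of_neg (by linarith)] at h1
  constructor <;> linarith

lemma Function.Periodic.deriv {E : Type*} [NormedAddCommGroup E] [NormedSpace ℝ E]
    {f : ℝ → E} {c : ℝ} (hf : Function.Periodic f c) : Function.Periodic (deriv f) c := by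
  intro x
  rw [← deriv_comp_add_const, show (fun y => f (y + c)) = f from funext hf]

section Calculus

variable {E : Type*} [NormedAddCommGroup E] [NormedSpace ℝ E] [CompleteSpace E]
  {g : ℝ → E}

lemma norm_le_norm_add_integral_norm_deriv (hg : ContDiff ℝ 1 g) {a b θ : ℝ}
    (hθ : θ ∈ Set.Icc a b) : ‖g a‖ ≤ ‖g θ‖ + ∫ t in a..b, ‖deriv g t‖ := by
  have hg' : Continuous (deriv g) := hg.continuous_deriv le_rfl
  have hftc : ∫ t in a..θ, deriv g t = g θ - g a :=
    intervalIntegral.integral_deriv_eq_sub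
      (fun x _ => (hg.differentiable one_ne_zero).differentiableAt) (hg'.intervalIntegrable _ _)
  calc ‖g a‖ ≤ ‖g θ‖ + ‖g θ - g a‖ := by simpa using norm_sub_le (g θ) (g θ - g a)
    _ ≤ ‖g θ‖ + ∫ t in a..θ, ‖deriv g t‖ := by
        gcongr
        rw [← hftc]
        exact intervalIntegral.norm_integral_le_integral_norm hθ.1
    _ ≤ ‖g θ‖ + ∫ t in a..b, ‖deriv g t‖ := by
        gcongr
        exact intervalIntegral.integral_mono_interval le_rfl hθ.1 hθ.2
          (.of_forall fun _ => norm_nonneg _) (hg'.norm.intervalIntegrable _ _)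

lemma mul_norm_le_integral_norm_add_mul_norm_deriv (hg : ContDiff ℝ 1 g) (a : ℝ) {δ : ℝ}
    (hδ : 0 ≤ δ) : δ * ‖g a‖ ≤ ∫ t in a..a + δ, (‖g t‖ + δ * ‖deriv g t‖) := by
  have hgn : Continuous fun t => ‖g t‖ := hg.continuous.norm
  have hg'n : Continuous fun t => ‖deriv g t‖ := (hg.continuous_deriv le_rfl).norm
  calc δ * ‖g a‖ = ∫ _ in a..a + δ, ‖g a‖ := by simp
    _ ≤ ∫ t in a..a + δ, (‖g t‖ + ∫ s in a..a + δ, ‖deriv g s‖) :=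
        intervalIntegral.integral_mono_on (by linarith) intervalIntegrable_const
          ((hgn.add continuous_const).intervalIntegrable _ _)
          fun θ hθ => norm_le_norm_add_integral_norm_deriv hg hθ
    _ = ∫ t in a..a + δ, (‖g t‖ + δ * ‖deriv g t‖) := by
        rw [intervalIntegral.integral_add (hgn.intervalIntegrable _ _) intervalIntegrable_const,
          intervalIntegral.integral_add (hgn.intervalIntegrable _ _)
            ((hg'n.intervalIntegrable _ _).const_mul δ),
          intervalIntegral.integral_const, intervalIntegral.integral_const_mul, smul_eq_mul,
          add_sub_cancel_left]

end Calculus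

lemma sum_integral_le_integral_of_forall_le {h : ℝ → ℝ} (h0 : ∀ x, 0 ≤ h x) {a b δ : ℝ}
    (hδ : 0 ≤ δ) (hab : a ≤ b) (hh : IntegrableOn h (Set.Ioc a b)) (F : Finset ℝ)
    (hF : ∀ ξ ∈ F, a ≤ ξ ∧ ξ + δ ≤ b) (hgap : ∀ ξ ∈ F, ∀ ξ' ∈ F, ξ < ξ' → ξ + δ ≤ ξ') :
    ∑ ξ ∈ F, ∫ θ in ξ..ξ + δ, h θ ≤ ∫ θ in a..b, h θ := by
  have hsub : ∀ ξ ∈ F, Set.Ioc ξ (ξ + δ) ⊆ Set.Ioc a b := fun ξ hξ =>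
    Set.Ioc_subset_Ioc (hF ξ hξ).1 (hF ξ hξ).2
  have hdisj : (F : Set ℝ).Pairwise (Function.onFun Disjoint fun ξ => Set.Ioc ξ (ξ + δ)) := by
    intro ξ hξ ξ' hξ' hne
    rcases hne.lt_or_gt with hlt | hlt
    · exact Set.Ioc_disjoint_Ioc_of_le (hgap ξ hξ ξ' hξ' hlt)
    · exact (Set.Ioc_disjoint_Ioc_of_le (hgap ξ' hξ' ξ hξ hlt)).symm
  calc ∑ ξ ∈ F, ∫ θ in ξ..ξ + δ, h θ = ∫ θ in ⋃ ξ ∈ F, Set.Ioc ξ (ξ + δ), h θ := by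
        rw [integral_biUnion_finset F (fun _ _ => measurableSet_Ioc) hdisj
          fun ξ hξ => hh.mono_set (hsub ξ hξ)]
        exact sum_congr rfl fun ξ _ => intervalIntegral.integral_of_le (by linarith)
    _ ≤ ∫ θ in Set.Ioc a b, h θ :=
        setIntegral_mono_set hh (.of_forall h0) (Set.iUnion₂_subset hsub).eventuallyLE
    _ = ∫ θ in a..b, h θ := (intervalIntegral.integral_of_le hab).symm

lemma Function.Periodic.sum_integral_le_integral {h : ℝ → ℝ} {T : ℝ} (hp : Function.Periodic h T)
    (h0 : ∀ x, 0 ≤ h x) (hh : LocallyIntegrable h) (hT : 0 ≤ T) {δ : ℝ} (hδ : 0 ≤ δ)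
    (F : Finset ℝ) (hgap : ∀ ξ ∈ F, ∀ ξ' ∈ F, ξ < ξ' → ξ + δ ≤ ξ')
    (hwin : ∀ ξ ∈ F, ∀ ξ' ∈ F, ξ' + δ ≤ ξ + T) :
    ∑ ξ ∈ F, ∫ θ in ξ..ξ + δ, h θ ≤ ∫ θ in (0 : ℝ)..T, h θ := by
  rcases F.eq_empty_or_nonempty with rfl | hF
  · simpa using intervalIntegral.integral_nonneg hT fun x _ => h0 x
  set a := F.min' hF
  have ha : a ∈ F := F.min'_mem hF
  calc ∑ ξ ∈ F, ∫ θ in ξ..ξ + δ, h θ ≤ ∫ θ in a..a + T, h θ :=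
        sum_integral_le_integral_of_forall_le h0 hδ (by linarith [hwin a ha a ha])
          ((hh.integrableOn_isCompact isCompact_Icc).mono_set Set.Ioc_subset_Icc_self) F
          (fun ξ hξ => ⟨F.min'_le ξ hξ, hwin a ha ξ hξ⟩) hgap
    _ = ∫ θ in (0 : ℝ)..T, h θ := by simpa using hp.intervalIntegral_add_eq a 0

/-- if `g` is continuously differentiable and 1-periodic and `F ⊆ [0,1)` is a
finite `δ`-separated set (in the distance to the nearest integer), then
`∑_{ξ ∈ F} |g(ξ)| ≤ δ⁻¹ ∫_0^1 |g| + ∫_0^1 |g'|`. -/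
theorem separated_points_sum_bound (g : ℝ → ℂ) (hg : ContDiff ℝ 1 g)
    (hper : Function.Periodic g 1) (δ : ℝ) (hδ0 : 0 < δ) (hδ1 : δ ≤ 1)
    (F : Finset ℝ) (hF : (F : Set ℝ) ⊆ Set.Ico 0 1)
    (hsep : ∀ ξ ∈ F, ∀ ξ' ∈ F, ξ ≠ ξ' → δ ≤ distNearestInt (ξ - ξ')) :
    ∑ ξ ∈ F, ‖g ξ‖
      ≤ δ⁻¹ * (∫ θ in (0 : ℝ)..1, ‖g θ‖)
        + ∫ θ in (0 : ℝ)..1, ‖deriv g θ‖ := by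
  have hsep' : ∀ ξ ∈ F, ∀ ξ' ∈ F, ξ < ξ' → ξ + δ ≤ ξ' ∧ ξ' + δ ≤ ξ + 1 :=
    fun ξ hξ ξ' hξ' hlt => add_le_and_add_le_add_one_of_le_distNearestInt (hF hξ).1 (hF hξ').2 hlt
      (hsep ξ' hξ' ξ hξ hlt.ne')
  have hwin : ∀ ξ ∈ F, ∀ ξ' ∈ F, ξ' + δ ≤ ξ + 1 := by
    intro ξ hξ ξ' hξ'
    rcases lt_trichotomy ξ ξ' with hlt | rfl | hlt
    · exact (hsep' ξ hξ ξ' hξ' hlt).2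
    · linarith
    · linarith [(hsep' ξ' hξ' ξ hξ hlt).1]
  have hgn : Continuous fun t => ‖g t‖ := hg.continuous.norm
  have hg'n : Continuous fun t => ‖deriv g t‖ := (hg.continuous_deriv le_rfl).norm
  have hsum : δ * ∑ ξ ∈ F, ‖g ξ‖ ≤ ∫ θ in (0 : ℝ)..1, (‖g θ‖ + δ * ‖deriv g θ‖) := by
    rw [mul_sum]
    refine (sum_le_sum fun ξ _ => mul_norm_le_integral_norm_add_mul_norm_deriv hg ξ hδ0.le).trans ?_
    have hp : Function.Periodic (fun t => ‖g t‖ + δ * ‖deriv g t‖) 1 := fun x => by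
      simp only [hper x, hper.deriv x]
    exact hp.sum_integral_le_integral (fun _ => by positivity)
      (hgn.add (continuous_const.mul hg'n)).locallyIntegrable zero_le_one hδ0.le F
      (fun ξ hξ ξ' hξ' hlt => (hsep' ξ hξ ξ' hξ' hlt).1) hwin
  rw [intervalIntegral.integral_add (hgn.intervalIntegrable _ _)
    ((hg'n.intervalIntegrable _ _).const_mul δ), intervalIntegral.integral_const_mul] at hsum
  rw [inv_mul_eq_div, div_add' _ _ _ hδ0.ne', le_div_iff₀' hδ0]
  linarith
end

section
/- There exists an absolute constant c > 0 with the following property. Let q ≥ 3 be odd, let a be an integer with gcd(a,q) = 1, let 0 < δ ≤ 1/2, set ℓ = ⌊log₂ q⌋ + 1, and let E ⊆ {0,1,…,ℓ−1} satisfy |E| < δℓ. Then there exists j ∈ {0,1,…,ℓ−1} \ E such that ‖2^j a/q‖ ≥ c · 2^{−δℓ}, where ‖·‖ denotes the distance to the nearest integer. -/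
/-!
Write `v j = ‖2^j a/q‖`. Always `v (j+1) ≤ 2 v j`, with equality when `v j ≤ 1/4`, and
`v j ≥ 1/q > 2^{-ℓ}` because `q ∤ 2^j a`. If `v j < 2^{-|E|}/4` for every `j ∉ E`, then every
index between the first and the last index outside `E` lies at most `|E|` doublings after one
of them, so `v ≤ 1/4` there and `v` doubles exactly all the way. As these two indices are at
least `ℓ - 1 - |E|` apart, the last one has `v > 2^{ℓ-1-|E|} · 2^{-ℓ} = 2^{-|E|}/2`, a
contradiction.
-/

open Finset

lemma distNearestInt_intCast_add (n : ℤ) (t : ℝ) :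
    distNearestInt (n + t) = distNearestInt t := by
  simp only [distNearestInt, round_intCast_add, Int.cast_add]
  ring_nf

lemma distNearestInt_nonneg (t : ℝ) : 0 ≤ distNearestInt t :=
  abs_nonneg _

lemma distNearestInt_le_abs_sub_intCast (t : ℝ) (n : ℤ) : distNearestInt t ≤ |t - n| :=
  round_le t n

lemma distNearestInt_eq_abs {t : ℝ} (h : |t| ≤ 1 / 2) : distNearestInt t = |t| := by
  refine le_antisymm (by simpa using distNearestInt_le_abs_sub_intCast t 0) ?_
  rcases eq_or_ne (round t) 0 with h0 | h0
  · simp [distNearestInt, h0]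
  · have h1 : (1 : ℝ) ≤ |(round t : ℝ)| := by exact_mod_cast Int.one_le_abs h0
    have h2 := abs_sub_abs_le_abs_sub (round t : ℝ) t
    rw [distNearestInt, abs_sub_comm]
    linarith

lemma distNearestInt_two_mul_le (t : ℝ) : distNearestInt (2 * t) ≤ 2 * distNearestInt t := by
  calc distNearestInt (2 * t) ≤ |2 * t - (2 * round t : ℤ)| :=
        distNearestInt_le_abs_sub_intCast _ _
    _ = 2 * distNearestInt t := by
        rw [distNearestInt, ← abs_two, ← abs_mul]; push_cast; ring_nf

lemma distNearestInt_two_mul {t : ℝ} (h : distNearestInt t ≤ 1 / 4) :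
    distNearestInt (2 * t) = 2 * distNearestInt t := by
  have h2 : 2 * t = (2 * round t : ℤ) + 2 * (t - round t) := by push_cast; ring
  have h3 : |2 * (t - round t)| = 2 * distNearestInt t := by rw [abs_mul, abs_two]; rfl
  rw [h2, distNearestInt_intCast_add, distNearestInt_eq_abs (by linarith), h3]

lemma distNearestInt_two_pow_mul_le (n : ℕ) (t : ℝ) :
    distNearestInt (2 ^ n * t) ≤ 2 ^ n * distNearestInt t := by
  induction n with
  | zero => simp
  | succ n ih =>
    calc distNearestInt (2 ^ (n + 1) * t) ≤ 2 * distNearestInt (2 ^ n * t) := by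
          rw [pow_succ, mul_comm _ (2 : ℝ), mul_assoc]; exact distNearestInt_two_mul_le _
      _ ≤ 2 ^ (n + 1) * distNearestInt t := by rw [pow_succ]; linarith

lemma distNearestInt_two_pow_mul {n : ℕ} {t : ℝ}
    (h : ∀ i < n, distNearestInt (2 ^ i * t) ≤ 1 / 4) :
    distNearestInt (2 ^ n * t) = 2 ^ n * distNearestInt t := by
  induction n with
  | zero => simp
  | succ n ih =>
    rw [pow_succ, mul_comm _ (2 : ℝ), mul_assoc, distNearestInt_two_mul (h n n.lt_succ_self),
      ih fun i hi => h i (hi.trans n.lt_succ_self), mul_assoc]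

lemma one_div_le_distNearestInt_intCast_div {n : ℤ} {q : ℕ} (h : ¬(q : ℤ) ∣ n) :
    1 / (q : ℝ) ≤ distNearestInt (n / q) := by
  rcases Nat.eq_zero_or_pos q with rfl | hq
  · simp [distNearestInt]
  have hqR : (0 : ℝ) < q := by exact_mod_cast hq
  have hne : n - q * round ((n : ℝ) / q) ≠ 0 := fun h0 => h ⟨_, sub_eq_zero.1 h0⟩
  have h1 : (1 : ℝ) ≤ |((n - q * round ((n : ℝ) / q) : ℤ) : ℝ)| := by
    exact_mod_cast Int.one_le_abs hne
  have h2 : (n : ℝ) / q - round ((n : ℝ) / q) = ((n - q * round ((n : ℝ) / q) : ℤ) : ℝ) / q := by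
    push_cast; field_simp
  rw [distNearestInt, h2, abs_div, abs_of_pos hqR]
  gcongr

lemma not_dvd_two_pow_mul {q : ℕ} (hq : q ≠ 1) (hodd : Odd q) {a : ℤ} (ha : Int.gcd a q = 1)
    (j : ℕ) : ¬(q : ℤ) ∣ 2 ^ j * a := by
  have h2 : IsCoprime (2 : ℤ) q := by
    exact_mod_cast Nat.isCoprime_iff_coprime.2 (Nat.coprime_two_left.2 hodd)
  have hcop : IsCoprime (2 ^ j * a) q := h2.pow_left.mul_left (Int.isCoprime_iff_gcd_eq_one.2 ha)
  intro hdvd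
  exact hq (by exact_mod_cast Int.isUnit_iff_natAbs_eq.1 (hcop.isUnit_of_dvd' hdvd dvd_rfl))

lemma one_div_two_pow_lt_distNearestInt {q : ℕ} (hq : q ≠ 1) (hodd : Odd q) {a : ℤ}
    (ha : Int.gcd a q = 1) (j : ℕ) :
    1 / 2 ^ (Nat.log 2 q + 1) < distNearestInt (2 ^ j * (a / q)) := by
  have hqpos : (0 : ℝ) < q := by exact_mod_cast hodd.pos
  have hlt : (q : ℝ) < 2 ^ (Nat.log 2 q + 1) := by
    exact_mod_cast Nat.lt_pow_succ_log_self one_lt_two q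
  calc 1 / 2 ^ (Nat.log 2 q + 1) < 1 / (q : ℝ) := one_div_lt_one_div_of_lt hqpos hlt
    _ ≤ distNearestInt (2 ^ j * (a / q)) := by
      have := one_div_le_distNearestInt_intCast_div (not_dvd_two_pow_mul hq hodd ha j)
      rwa [Int.cast_mul, Int.cast_pow, Int.cast_ofNat, mul_div_assoc] at this

lemma exists_notMem_le_le_add_card {E : Finset ℕ} {i j : ℕ} (hi : i ∉ E) (hij : i ≤ j) :
    ∃ k ∉ E, k ≤ j ∧ j ≤ k + #E := by
  set T := (range (j + 1)).filter (· ∉ E)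
  have hT : T.Nonempty := ⟨i, by simp [T, hi]; omega⟩
  obtain ⟨hkj, hkE⟩ : T.max' hT < j + 1 ∧ T.max' hT ∉ E := by simpa [T] using T.max'_mem hT
  refine ⟨T.max' hT, hkE, by omega, ?_⟩
  have hsub : Ioc (T.max' hT) j ⊆ E := fun m hm => by
    rw [mem_Ioc] at hm
    by_contra hmE
    have := T.le_max' m (by simp [T, hmE]; omega)
    omega
  have := card_le_card hsub
  rw [Nat.card_Ioc] at this
  omega

lemma card_le_max'_sub_min'_add_one {s : Finset ℕ} (hs : s.Nonempty) :
    #s ≤ s.max' hs - s.min' hs + 1 := by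
  have hsub : s ⊆ Icc (s.min' hs) (s.max' hs) := fun x hx =>
    mem_Icc.2 ⟨s.min'_le x hx, s.le_max' x hx⟩
  have := card_le_card hsub
  rwa [Nat.card_Icc, Nat.sub_add_comm (s.min'_le _ (s.max'_mem hs))] at this

theorem exists_notMem_one_div_le_distNearestInt_two_pow_mul (x : ℝ) {ℓ : ℕ} {E : Finset ℕ}
    (hE : #E < ℓ) (hx : ∀ j < ℓ, 1 / 2 ^ ℓ < distNearestInt (2 ^ j * x)) :
    ∃ j < ℓ, j ∉ E ∧ 1 / (4 * 2 ^ #E) ≤ distNearestInt (2 ^ j * x) := by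
  by_contra! h
  set S := range ℓ \ E
  have mem_S {j : ℕ} : j ∈ S ↔ j < ℓ ∧ j ∉ E := by simp [S]
  have hcardS : ℓ - #E ≤ #S := by
    have := le_card_sdiff E (range ℓ)
    rwa [card_range] at this
  have hS : S.Nonempty := card_pos.1 (by omega)
  obtain ⟨hj0ℓ, hj0E⟩ := mem_S.1 (S.min'_mem hS)
  obtain ⟨hjLℓ, hjLE⟩ := mem_S.1 (S.max'_mem hS)
  have hj0L : S.min' hS ≤ S.max' hS := S.min'_le _ (S.max'_mem hS)
  set j0 := S.min' hS
  set jL := S.max' hS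
  have hquarter : ∀ j, j0 ≤ j → j < ℓ → distNearestInt (2 ^ j * x) ≤ 1 / 4 := by
    intro j hj hjℓ
    obtain ⟨k, hkE, hkj, hjk⟩ := exists_notMem_le_le_add_card hj0E hj
    calc distNearestInt (2 ^ j * x) = distNearestInt (2 ^ (j - k) * (2 ^ k * x)) := by
          rw [← mul_assoc, ← pow_add, Nat.sub_add_cancel hkj]
      _ ≤ 2 ^ (j - k) * distNearestInt (2 ^ k * x) := distNearestInt_two_pow_mul_le _ _
      _ ≤ 2 ^ #E * (1 / (4 * 2 ^ #E)) :=
          mul_le_mul (pow_le_pow_right₀ one_le_two (by omega)) (h k (by omega) hkE).le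
            (distNearestInt_nonneg _) (by positivity)
      _ = 1 / 4 := by field_simp
  have hdouble : distNearestInt (2 ^ jL * x) = 2 ^ (jL - j0) * distNearestInt (2 ^ j0 * x) := by
    have := distNearestInt_two_pow_mul (n := jL - j0) (t := 2 ^ j0 * x) fun i hi => by
      rw [← mul_assoc, ← pow_add]
      exact hquarter _ (by omega) (by omega)
    rwa [← mul_assoc, ← pow_add, Nat.sub_add_cancel hj0L] at this
  have hspan : 2 ^ ℓ ≤ (2 : ℝ) ^ (jL - j0) * 2 * 2 ^ #E := by
    have := card_le_max'_sub_min'_add_one hS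
    rw [← pow_succ, ← pow_add]
    exact pow_le_pow_right₀ one_le_two (by omega)
  have hlow := (div_lt_iff₀' (by positivity)).1 (hx j0 hj0ℓ)
  have hhigh := (lt_div_iff₀ (by positivity)).1 (h jL hjLℓ hjLE)
  rw [hdouble] at hhigh
  nlinarith [distNearestInt_nonneg (2 ^ j0 * x)]

/-- for odd `q ≥ 3`, `(a,q) = 1`, `0 < δ ≤ 1/2`, `ℓ = ⌊log₂ q⌋ + 1`, and
`E ⊆ {0,…,ℓ-1}` with `|E| < δℓ`, there is `j < ℓ`, `j ∉ E`, with `‖2^j a/q‖ ≥ c 2^{-δℓ}`. -/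
theorem exists_digit_not_in_E_far_from_int :
    ∃ c : ℝ, 0 < c ∧ ∀ (q : ℕ), 3 ≤ q → Odd q → ∀ a : ℤ, Int.gcd a q = 1 →
      ∀ δ : ℝ, 0 < δ → δ ≤ 1 / 2 →
      ∀ E : Finset ℕ, E ⊆ Finset.range (Nat.log 2 q + 1) →
      (E.card : ℝ) < δ * (Nat.log 2 q + 1) →
      ∃ j ∈ Finset.range (Nat.log 2 q + 1), j ∉ E ∧
        c * (2 : ℝ) ^ (-(δ * (Nat.log 2 q + 1)))
          ≤ distNearestInt ((2 : ℝ) ^ j * a / q) := by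
  refine ⟨1 / 4, by norm_num, fun q hq hodd a ha δ _ hδ E _ hcard => ?_⟩
  have hEℓ : #E < Nat.log 2 q + 1 := by
    have : (#E : ℝ) < Nat.log 2 q + 1 := by nlinarith
    exact_mod_cast this
  obtain ⟨j, hj, hjE, hfar⟩ := exists_notMem_one_div_le_distNearestInt_two_pow_mul ((a : ℝ) / q)
    hEℓ fun j _ => one_div_two_pow_lt_distNearestInt (by omega) hodd ha j
  refine ⟨j, mem_range.2 hj, hjE, ?_⟩
  calc 1 / 4 * (2 : ℝ) ^ (-(δ * (Nat.log 2 q + 1))) ≤ 1 / 4 * (2 : ℝ) ^ (-(#E : ℝ)) := by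
        gcongr
        exact one_le_two
    _ = 1 / (4 * 2 ^ #E) := by rw [Real.rpow_neg zero_le_two, Real.rpow_natCast]; ring
    _ ≤ distNearestInt ((2 : ℝ) ^ j * a / q) := by rwa [mul_div_assoc]
end

section
/- Let q₁ and q₂ be coprime positive integers, q = q₁q₂, and let χ₁ be a primitive Dirichlet character modulo q₁. Then for every integer k, Σ_{1 ≤ a ≤ q, gcd(a,q)=1} χ₁(a) e^{2πi a k/q} = \overline{χ₁}(k) · τ(χ₁) · χ₁(q₂) · c_{q₂}(k), where τ(χ₁) = Σ_{m=1}^{q₁} χ₁(m) e^{2πi m/q₁} is the Gauss sum and c_{q₂}(k) = Σ_{1 ≤ a₂ ≤ q₂, gcd(a₂,q₂)=1} e^{2πi a₂ k/q₂} is the Ramanujan sum. -/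
/-!
Write `a = a₁ q₂ + a₂ q₁` with `a₁` modulo `q₁` and `a₂` modulo `q₂`; by the Chinese remainder
theorem this parametrises `ℤ/q`, and `a` is a unit exactly when `a₁` and `a₂` are. Since
`a/q = a₁/q₁ + a₂/q₂` and `χ₁(a) = χ₁(a₁) χ₁(q₂)`, the sum factors as `χ₁(q₂)` times
`∑ χ₁(a₁) e(a₁k/q₁)` times the Ramanujan sum. For primitive `χ₁` the middle factor is
`χ̄₁(k) τ(χ₁)`, also when `k` is not a unit modulo `q₁`, where both sides vanish.
-/

open Finset

namespace ZMod

section Sums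

variable {n : ℕ} [NeZero n] {M : Type*} [AddCommMonoid M]

theorem sum_natCast_range (F : ZMod n → M) : ∑ k ∈ range n, F k = ∑ x, F x :=
  sum_nbij' (↑) val (by simp) (by simp [val_lt]) (fun _ hk => val_cast_of_lt (mem_range.1 hk))
    (by simp) (fun _ _ => rfl)

theorem sum_natCast_Icc_one (F : ZMod n → M) : ∑ a ∈ Icc 1 n, F a = ∑ x, F x := by
  rw [← Finset.Ico_add_one_right_eq_Icc, sum_Ico_eq_sum_range, Nat.add_sub_cancel,
    ← Equiv.sum_comp (Equiv.addLeft (1 : ZMod n))]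
  push_cast
  exact sum_natCast_range fun x => F (1 + x)

theorem sum_natCast_Icc_one_filter_coprime (F : ZMod n → M) :
    ∑ a ∈ Icc 1 n with a.gcd n = 1, F a = ∑ x with IsUnit x, F x := by
  simp_rw [sum_filter, ← Nat.coprime_iff_gcd_eq_one, ← isUnit_iff_coprime]
  exact sum_natCast_Icc_one fun x => if IsUnit x then F x else 0

end Sums

section CRT

variable {m n : ℕ}

def crtCombine (m n : ℕ) (p : ZMod m × ZMod n) : ZMod (m * n) :=
  ((p.1.val * n + p.2.val * m : ℕ) : ZMod (m * n))

theorem castHom_crtCombine_fst [NeZero m] (p : ZMod m × ZMod n) :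
    castHom (dvd_mul_right m n) (ZMod m) (crtCombine m n p) = p.1 * n := by
  rw [crtCombine, map_natCast]
  simp

theorem castHom_crtCombine_snd [NeZero n] (p : ZMod m × ZMod n) :
    castHom (dvd_mul_left n m) (ZMod n) (crtCombine m n p) = p.2 * m := by
  rw [crtCombine, map_natCast]
  simp

variable [NeZero m] [NeZero n]

theorem isUnit_iff_isUnit_castHom (y : ZMod (m * n)) :
    IsUnit y ↔ IsUnit (castHom (dvd_mul_right m n) (ZMod m) y) ∧
      IsUnit (castHom (dvd_mul_left n m) (ZMod n) y) := by
  rw [← natCast_zmod_val y]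
  simp only [map_natCast, isUnit_iff_coprime, Nat.coprime_mul_iff_right]

theorem crtCombine_injective (h : m.Coprime n) :
    Function.Injective (crtCombine m n) := by
  intro p p' hpp'
  have h₁ := congrArg (castHom (dvd_mul_right m n) (ZMod m)) hpp'
  have h₂ := congrArg (castHom (dvd_mul_left n m) (ZMod n)) hpp'
  rw [castHom_crtCombine_fst, castHom_crtCombine_fst] at h₁
  rw [castHom_crtCombine_snd, castHom_crtCombine_snd] at h₂
  exact Prod.ext (((isUnit_iff_coprime n m).2 h.symm).mul_left_inj.1 h₁)
    (((isUnit_iff_coprime m n).2 h).mul_left_inj.1 h₂)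

theorem crtCombine_bijective (h : m.Coprime n) :
    Function.Bijective (crtCombine m n) :=
  (Fintype.bijective_iff_injective_and_card _).2 ⟨crtCombine_injective h, by simp⟩

theorem isUnit_crtCombine_iff (h : m.Coprime n) (p : ZMod m × ZMod n) :
    IsUnit (crtCombine m n p) ↔ IsUnit p.1 ∧ IsUnit p.2 := by
  rw [isUnit_iff_isUnit_castHom, castHom_crtCombine_fst, castHom_crtCombine_snd,
    ((isUnit_iff_coprime n m).2 h.symm).mul_right_iff, ((isUnit_iff_coprime m n).2 h).mul_right_iff]

theorem stdAddChar_intCast_mul_add (a b : ℤ) :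
    stdAddChar ((a * n + b * m : ℤ) : ZMod (m * n)) =
      stdAddChar (a : ZMod m) * stdAddChar (b : ZMod n) := by
  have hm : (m : ℂ) ≠ 0 := NeZero.ne _
  have hn : (n : ℂ) ≠ 0 := NeZero.ne _
  rw [stdAddChar_coe, stdAddChar_coe, stdAddChar_coe, ← Complex.exp_add]
  congr 1
  push_cast
  field_simp

theorem stdAddChar_intCast_mul_crtCombine (k : ℤ) (p : ZMod m × ZMod n) :
    stdAddChar ((k : ZMod (m * n)) * crtCombine m n p) =
      stdAddChar ((k : ZMod m) * p.1) * stdAddChar ((k : ZMod n) * p.2) := by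
  convert stdAddChar_intCast_mul_add (m := m) (n := n) (k * p.1.val) (k * p.2.val) using 2 <;>
    push_cast [crtCombine, natCast_zmod_val] <;> ring

theorem sum_isUnit_mulChar_mul_stdAddChar_of_coprime (h : m.Coprime n)
    (χ : MulChar (ZMod m) ℂ) (k : ℤ) :
    ∑ x : ZMod (m * n) with IsUnit x,
        χ (castHom (dvd_mul_right m n) (ZMod m) x) * stdAddChar ((k : ZMod (m * n)) * x) =
      χ n * (∑ x, χ x * stdAddChar ((k : ZMod m) * x)) *
        ∑ x : ZMod n with IsUnit x, stdAddChar ((k : ZMod n) * x) := by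
  rw [sum_filter, sum_filter, ← (crtCombine_bijective h).sum_comp, Fintype.sum_prod_type,
    mul_assoc, sum_mul_sum, mul_sum]
  refine sum_congr rfl fun x _ => ?_
  rw [mul_sum]
  refine sum_congr rfl fun y _ => ?_
  simp only [isUnit_crtCombine_iff h, castHom_crtCombine_fst, stdAddChar_intCast_mul_crtCombine,
    map_mul]
  by_cases hx : IsUnit x
  · by_cases hy : IsUnit y <;> simp [hx, hy]; ring
  · simp [hx, MulChar.map_nonunit χ hx]

end CRT

theorem stdAddChar_natCast {n : ℕ} [NeZero n] (a : ℕ) :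
    stdAddChar (a : ZMod n) = Complex.exp (2 * Real.pi * Complex.I * a / n) := by
  rw [← Int.cast_natCast, stdAddChar_coe, Int.cast_natCast]

theorem stdAddChar_intCast_mul_natCast {n : ℕ} [NeZero n] (k : ℤ) (a : ℕ) :
    stdAddChar ((k : ZMod n) * (a : ZMod n)) =
      Complex.exp (2 * Real.pi * Complex.I * a * k / n) := by
  rw [← Int.cast_natCast, ← Int.cast_mul, stdAddChar_coe]
  push_cast
  ring_nf

end ZMod

theorem DirichletCharacter.sum_mul_addChar_mul_eq_conj_mul_gaussSum {N : ℕ} [NeZero N]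
    {χ : DirichletCharacter ℂ N} (hχ : χ.IsPrimitive) (e : AddChar (ZMod N) ℂ) (a : ZMod N) :
    ∑ x, χ x * e (a * x) = starRingEnd ℂ (χ a) * gaussSum χ e := by
  rw [← Complex.star_def, MulChar.star_apply', ← gaussSum_mulShift_of_isPrimitive e hχ]
  rfl

/-- for coprime positive `q₁, q₂`, `q = q₁q₂`, a primitive Dirichlet character
`χ₁ (mod q₁)` and any integer `k`,
`∑_{1≤a≤q, (a,q)=1} χ₁(a) e(ak/q) = \overline{χ₁}(k) τ(χ₁) χ₁(q₂) c_{q₂}(k)`,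
where `τ(χ₁)` is the Gauss sum and `c_{q₂}(k)` the Ramanujan sum. -/
theorem character_sum_factorization
    (q₁ q₂ : ℕ) (hq₁ : 0 < q₁) (hq₂ : 0 < q₂) (hcop : Nat.Coprime q₁ q₂)
    (χ₁ : DirichletCharacter ℂ q₁) (hχ₁ : χ₁.IsPrimitive) (k : ℤ) :
    ∑ a ∈ (Finset.Icc 1 (q₁ * q₂)).filter (fun a : ℕ => Nat.gcd a (q₁ * q₂) = 1),
        χ₁ ((a : ℕ) : ZMod q₁) *
          Complex.exp (2 * Real.pi * Complex.I * a * k / (q₁ * q₂))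
      = (starRingEnd ℂ) (χ₁ ((k : ℤ) : ZMod q₁)) *
          (∑ m ∈ Finset.Icc 1 q₁,
            χ₁ ((m : ℕ) : ZMod q₁) * Complex.exp (2 * Real.pi * Complex.I * m / q₁)) *
          χ₁ ((q₂ : ℕ) : ZMod q₁) *
          ∑ a₂ ∈ (Finset.Icc 1 q₂).filter (fun a : ℕ => Nat.gcd a q₂ = 1),
            Complex.exp (2 * Real.pi * Complex.I * a₂ * k / q₂) := by
  have := NeZero.of_pos hq₁
  have := NeZero.of_pos hq₂
  have gauss : ∑ m ∈ Icc 1 q₁, χ₁ m * Complex.exp (2 * Real.pi * Complex.I * m / q₁) =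
      gaussSum χ₁ ZMod.stdAddChar := by
    simp_rw [← ZMod.stdAddChar_natCast]
    exact ZMod.sum_natCast_Icc_one fun x => χ₁ x * ZMod.stdAddChar x
  have lhs : ∑ a ∈ Icc 1 (q₁ * q₂) with a.gcd (q₁ * q₂) = 1,
        χ₁ a * Complex.exp (2 * Real.pi * Complex.I * a * k / (q₁ * q₂)) =
      ∑ x : ZMod (q₁ * q₂) with IsUnit x,
        χ₁ (ZMod.castHom (dvd_mul_right q₁ q₂) (ZMod q₁) x) *
          ZMod.stdAddChar ((k : ZMod (q₁ * q₂)) * x) := by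
    rw [← ZMod.sum_natCast_Icc_one_filter_coprime]
    push_cast [map_natCast, ZMod.stdAddChar_intCast_mul_natCast]
    rfl
  rw [lhs, ZMod.sum_isUnit_mulChar_mul_stdAddChar_of_coprime hcop,
    DirichletCharacter.sum_mul_addChar_mul_eq_conj_mul_gaussSum hχ₁, gauss,
    ← ZMod.sum_natCast_Icc_one_filter_coprime]
  simp_rw [ZMod.stdAddChar_intCast_mul_natCast]
  ring
end
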